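/- arXiv:2306.01120 — 3 statements merged into one kernel-verified Lean document; each statement's English description precedes it below -/
import Mathlib

section
/- Let x : ℝ → ℂⁿ be a Schwartz function that is not identically zero, with Fourier transform 𝒳(ω) := ∫_ℝ x(t) e^{−iωt} dt, let Q be an n×n complex Hermitian positive definite matrix, and let 0 < ϖ_i < ϖ_l be real numbers. If 𝒳(ω) = 0 for every ω with |ω| > ϖ_i, then ∫_ℝ (ϖ_l² · x(t)*Qx(t) − x'(t)*Qx'(t)) dt > 0. -/
open Matrix Complex MeasureTheory
open scoped ComplexOrder

open SchwartzMap
open scoped FourierTransform RealInnerProductSpace Real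

namespace FDEEFAux

variable {n : ℕ}

noncomputable def starCLM : (Fin n → ℂ) →L[ℝ] (Fin n → ℂ) :=
  (starL' ℝ : (Fin n → ℂ) ≃L[ℝ] (Fin n → ℂ)).toContinuousLinearMap

noncomputable def conjS (f : 𝓢(ℝ, Fin n → ℂ)) : 𝓢(ℝ, Fin n → ℂ) :=
  SchwartzMap.bilinLeftCLM ((ContinuousLinearMap.lsmul ℝ ℝ).flip.comp starCLM)
    (Function.HasTemperateGrowth.const (1 : ℝ)) f

lemma conjS_apply (f : 𝓢(ℝ, Fin n → ℂ)) (t : ℝ) : conjS f t = star (f t) := one_smul ℝ _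

noncomputable def Mq (Q : Matrix (Fin n) (Fin n) ℂ) :
    (Fin n → ℂ) →L[ℂ] (Fin n → ℂ) →L[ℂ] ℂ :=
  LinearMap.toContinuousLinearMap
    ((LinearMap.toContinuousLinearMap.toLinearMap).comp (Matrix.toLinearMap₂' ℂ Q))

lemma Mq_apply (Q : Matrix (Fin n) (Fin n) ℂ) (u v : Fin n → ℂ) :
    Mq Q u v = u ⬝ᵥ Q.mulVec v := by
  simp [Mq, Matrix.toLinearMap₂'_apply']

end FDEEFAux

namespace FDEEFAux

lemma fourierChar_conj (r : ℝ) : (starRingEnd ℂ) (𝐞 (-r) : ℂ) = (𝐞 r : ℂ) := by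
  simp only [Real.fourierChar_apply]
  rw [← Complex.exp_conj]
  congr 1
  simp [Complex.ext_iff]

lemma star_circle_smul (r : ℝ) (v : Fin n → ℂ) :
    star ((𝐞 (-r)) • v) = (𝐞 r) • star v := by
  rw [Circle.smul_def, Circle.smul_def, star_smul]
  congr 1
  exact fourierChar_conj r

lemma starCLM_apply (v : Fin n → ℂ) : starCLM v = star v := rfl

set_option maxHeartbeats 1000000 in
lemma parseval (f : 𝓢(ℝ, Fin n → ℂ)) (M : (Fin n → ℂ) →L[ℂ] (Fin n → ℂ) →L[ℂ] ℂ) :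
    ∫ t : ℝ, M (star (f t)) (f t) = ∫ ξ : ℝ, M (star (𝓕 ⇑f ξ)) (𝓕 ⇑f ξ) := by
  set c : 𝓢(ℝ, Fin n → ℂ) := conjS f with hc
  set h : 𝓢(ℝ, Fin n → ℂ) := (fourierTransformCLE ℂ (𝓢(ℝ, Fin n → ℂ))).symm c with hh
  have hFh : 𝓕 ⇑h = ⇑c := by
    have : ⇑(fourierTransformCLE ℂ (𝓢(ℝ, Fin n → ℂ)) h) = 𝓕 ⇑h := rfl
    rw [← this, hh, (fourierTransformCLE ℂ (𝓢(ℝ, Fin n → ℂ))).apply_symm_apply]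
  have hint : ∀ ξ : ℝ, Integrable (fun t : ℝ => (𝐞 (-⟪t, ξ⟫)) • f t) := by
    intro ξ
    exact (VectorFourier.fourierIntegral_convergent_iff (E := Fin n → ℂ) (V := ℝ) (W := ℝ)
      (L := innerₗ ℝ) (μ := volume) Real.continuous_fourierChar
      (by simp only [innerₗ_apply_apply]; exact continuous_inner) ξ).2 f.integrable
  have hhval : ∀ ξ : ℝ, h ξ = star (𝓕 ⇑f ξ) := by
    intro ξ
    have h1 : h ξ = 𝓕⁻ (⇑c) ξ := by
      rw [hh]; exact congrFun (fourierInv_coe c) ξ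
    have h2 : star (𝓕 ⇑f ξ) = ∫ t : ℝ, starCLM ((𝐞 (-⟪t, ξ⟫)) • f t) := by
      rw [(starCLM (n := n)).integral_comp_comm (hint ξ), starCLM_apply,
        Real.fourier_eq]
    rw [h1, h2, Real.fourierInv_eq]
    congr 1
    funext t
    show (𝐞 ⟪t, ξ⟫) • c t = star ((𝐞 (-⟪t, ξ⟫)) • f t)
    rw [star_circle_smul, conjS_apply]
  have hflip : (innerₗ ℝ).flip = innerₗ ℝ := by
    apply LinearMap.ext; intro v; apply LinearMap.ext; intro w
    simp only [LinearMap.flip_apply, innerₗ_apply_apply]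
    exact real_inner_comm v w
  have key := VectorFourier.integral_bilin_fourierIntegral_eq_flip (V := ℝ) (W := ℝ)
    (L := innerₗ ℝ) (μ := volume) (ν := volume) M Real.continuous_fourierChar
    (by simp only [innerₗ_apply_apply]; exact continuous_inner) h.integrable f.integrable
  rw [hflip] at key
  have e1 : (fun ξ : ℝ => M (VectorFourier.fourierIntegral 𝐞 volume (innerₗ ℝ) (⇑h) ξ) (f ξ))
      = fun ξ : ℝ => M (star (f ξ)) (f ξ) := by
    funext ξ
    rw [show VectorFourier.fourierIntegral 𝐞 volume (innerₗ ℝ) (⇑h) ξ = 𝓕 ⇑h ξ from rfl,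
      hFh, conjS_apply]
  have e2 : (fun t : ℝ => M (h t) (VectorFourier.fourierIntegral 𝐞 volume (innerₗ ℝ) (⇑f) t))
      = fun t : ℝ => M (star (𝓕 ⇑f t)) (𝓕 ⇑f t) := by
    funext t
    rw [hhval t]
    rfl
  rw [e1, e2] at key
  exact key

end FDEEFAux

namespace FDEEFAux

lemma continuous_form (f : 𝓢(ℝ, Fin n → ℂ)) (M : (Fin n → ℂ) →L[ℂ] (Fin n → ℂ) →L[ℂ] ℂ) :
    Continuous (fun t : ℝ => M (star (f t)) (f t)) :=
  M.continuous₂.comp ((continuous_star.comp f.continuous).prodMk f.continuous)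

lemma integrable_form (f : 𝓢(ℝ, Fin n → ℂ)) (M : (Fin n → ℂ) →L[ℂ] (Fin n → ℂ) →L[ℂ] ℂ) :
    Integrable (fun t : ℝ => M (star (f t)) (f t)) := by
  obtain ⟨C, hC⟩ : ∃ C : ℝ, ∀ t : ℝ, ‖f t‖ ≤ C :=
    ⟨‖f.toBoundedContinuousFunction‖, fun t => f.toBoundedContinuousFunction.norm_coe_le_norm t⟩
  refine (f.integrable.norm.const_mul (‖M‖ * C)).mono'
    (continuous_form f M).aestronglyMeasurable ?_
  filter_upwards with t
  calc ‖M (star (f t)) (f t)‖ ≤ ‖M‖ * ‖star (f t)‖ * ‖f t‖ := M.le_opNorm₂ _ _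
    _ = ‖M‖ * ‖f t‖ * ‖f t‖ := by rw [norm_star]
    _ ≤ ‖M‖ * C * ‖f t‖ :=
        mul_le_mul_of_nonneg_right (mul_le_mul_of_nonneg_left (hC t) (norm_nonneg M))
          (norm_nonneg (f t))

end FDEEFAux

open scoped Real FourierTransform
open SchwartzMap FDEEFAux


set_option maxHeartbeats 1000000

/-- Time-domain in-band positivity of the FD-EEF with low-frequency weight
`Ψ_l = [[−1, 0], [0, ϖ_l²]]`: for a nonzero Schwartz signal `x` whose Fourier
transform `𝒳(ω) = ∫ x(t) e^{−iωt} dt` vanishes for `|ω| > ϖ_i` with `ϖ_i < ϖ_l`,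
one has `∫ (ϖ_l² x*Qx − x'*Qx') dt > 0`. -/
theorem fdEEF_time_lowFreq_inband_pos {n : ℕ}
    (x : SchwartzMap ℝ (Fin n → ℂ)) (hx : ∃ t : ℝ, x t ≠ 0)
    (Q : Matrix (Fin n) (Fin n) ℂ) (hQ : Q.PosDef)
    (ϖi ϖl : ℝ) (hϖi : 0 < ϖi) (hil : ϖi < ϖl)
    (hsupp : ∀ ω : ℝ, ϖi < |ω| →
      (∫ t : ℝ, Complex.exp (-(Complex.I * ω * t)) • x t) = 0) :
    0 < ∫ t : ℝ,
        (ϖl ^ 2 * (star (x t) ⬝ᵥ Q.mulVec (x t)).re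
          - (star (deriv (fun s : ℝ => x s) t) ⬝ᵥ
              Q.mulVec (deriv (fun s : ℝ => x s) t)).re) := by
  classical
  set M : (Fin n → ℂ) →L[ℂ] (Fin n → ℂ) →L[ℂ] ℂ := Mq Q with hMdef
  set x' : 𝓢(ℝ, Fin n → ℂ) := SchwartzMap.derivCLM ℝ (Fin n → ℂ) x with hx'def
  have hx'coe : ⇑x' = deriv ⇑x := funext fun t => SchwartzMap.derivCLM_apply ℝ x t
  have hFx' : 𝓕 ⇑x' = fun ξ : ℝ => ((2 * ↑π * Complex.I * ↑ξ : ℂ)) • 𝓕 ⇑x ξ := by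
    rw [hx'coe]
    exact Real.fourier_deriv x.integrable x.differentiable (hx'coe ▸ x'.integrable)
  set X : 𝓢(ℝ, Fin n → ℂ) := fourierTransformCLM ℂ x with hXdef
  have hXcoe : ⇑X = 𝓕 ⇑x := rfl
  set X' : 𝓢(ℝ, Fin n → ℂ) := fourierTransformCLM ℂ x' with hX'def
  have hX'coe : ⇑X' = 𝓕 ⇑x' := rfl
  set G : ℝ → ℂ := fun ξ => M (star (𝓕 ⇑x ξ)) (𝓕 ⇑x ξ) with hGdef
  have hGX : G = fun ξ => M (star (X ξ)) (X ξ) := by rw [hGdef, hXcoe]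
  have hGint : Integrable G := hGX ▸ integrable_form X M
  have hGcont : Continuous G := hGX ▸ continuous_form X M
  have hconj : ∀ ξ : ℝ, (starRingEnd ℂ) (2 * ↑π * Complex.I * ↑ξ) * (2 * ↑π * Complex.I * ↑ξ)
      = (((2 * π * ξ) ^ 2 : ℝ) : ℂ) := by
    intro ξ
    have h1 : (starRingEnd ℂ) (2 * ↑π * Complex.I * ↑ξ) = -(2 * ↑π * Complex.I * ↑ξ) := by
      simp only [_root_.map_mul, Complex.conj_I, Complex.conj_ofReal, map_ofNat]
      ring
    rw [h1]
    have h2 : Complex.I ^ 2 = -1 := Complex.I_sq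
    push_cast
    linear_combination (-4 * (π : ℂ) ^ 2 * (ξ : ℂ) ^ 2) * h2
  have hG2 : (fun ξ : ℝ => M (star (𝓕 ⇑x' ξ)) (𝓕 ⇑x' ξ))
      = fun ξ : ℝ => (((2 * π * ξ) ^ 2 : ℝ) : ℂ) * G ξ := by
    funext ξ
    have h1 : 𝓕 ⇑x' ξ = (2 * ↑π * Complex.I * ↑ξ : ℂ) • 𝓕 ⇑x ξ := congrFun hFx' ξ
    simp only [h1, star_smul, _root_.map_smul, ContinuousLinearMap.smul_apply, smul_eq_mul,
      RCLike.star_def, hGdef]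
    linear_combination (M (star (𝓕 ⇑x ξ))) (𝓕 ⇑x ξ) * hconj ξ
  have hG'int : Integrable (fun ξ : ℝ => (((2 * π * ξ) ^ 2 : ℝ) : ℂ) * G ξ) := by
    rw [← hG2]
    have h : (fun ξ : ℝ => M (star (X' ξ)) (X' ξ))
        = fun ξ : ℝ => M (star (𝓕 ⇑x' ξ)) (𝓕 ⇑x' ξ) := by rw [hX'coe]
    exact h ▸ integrable_form X' M
  have hA : Integrable (fun t : ℝ => M (star (x t)) (x t)) := integrable_form x M
  have hB : Integrable (fun t : ℝ => M (star (x' t)) (x' t)) := integrable_form x' M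
  have hTint : Integrable (fun t : ℝ =>
      ((ϖl ^ 2 : ℝ) : ℂ) * M (star (x t)) (x t) - M (star (x' t)) (x' t)) :=
    (hA.const_mul _).sub hB
  have hfreqint : Integrable (fun ξ : ℝ => (((ϖl ^ 2 - (2 * π * ξ) ^ 2 : ℝ) : ℂ)) * G ξ) := by
    have e : (fun ξ : ℝ => (((ϖl ^ 2 - (2 * π * ξ) ^ 2 : ℝ) : ℂ)) * G ξ)
        = fun ξ : ℝ => ((ϖl ^ 2 : ℝ) : ℂ) * G ξ - (((2 * π * ξ) ^ 2 : ℝ) : ℂ) * G ξ := by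
      funext ξ; push_cast; ring
    rw [e]
    exact (hGint.const_mul _).sub hG'int
  have key : (∫ t : ℝ, (((ϖl ^ 2 : ℝ) : ℂ) * M (star (x t)) (x t) - M (star (x' t)) (x' t)))
      = ∫ ξ : ℝ, (((ϖl ^ 2 - (2 * π * ξ) ^ 2 : ℝ) : ℂ)) * G ξ := by
    rw [integral_sub (hA.const_mul _) hB, integral_const_mul, parseval x M, parseval x' M,
      hG2, ← hGdef, ← integral_const_mul, ← integral_sub (hGint.const_mul _) hG'int]
    congr 1
    funext ξ
    push_cast
    ring
  have hFsupp : ∀ ξ : ℝ, ϖi < |2 * π * ξ| → 𝓕 ⇑x ξ = 0 := by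
    intro ξ hξ
    have h0 := hsupp (2 * π * ξ) hξ
    rw [Real.fourier_real_eq_integral_exp_smul, ← h0]
    congr 1
    funext t
    congr 2
    push_cast
    ring
  set ψ : ℝ → ℝ := fun ξ => (ϖl ^ 2 - (2 * π * ξ) ^ 2) * (G ξ).re with hψdef
  have hψmassage : ∀ ξ : ℝ, ((((ϖl ^ 2 - (2 * π * ξ) ^ 2 : ℝ) : ℂ)) * G ξ).re = ψ ξ := by
    intro ξ
    rw [Complex.re_ofReal_mul]
  have hfactor : ∀ ξ : ℝ, 𝓕 ⇑x ξ ≠ 0 → 0 < ϖl ^ 2 - (2 * π * ξ) ^ 2 := by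
    intro ξ hξ
    have h1 : |2 * π * ξ| ≤ ϖi := le_of_not_gt fun h => hξ (hFsupp ξ h)
    have h2 : (2 * π * ξ) ^ 2 ≤ ϖi ^ 2 := by
      rw [← _root_.sq_abs]
      exact pow_le_pow_left₀ (abs_nonneg _) h1 2
    have h3 : ϖi ^ 2 < ϖl ^ 2 := by nlinarith
    linarith
  have hGpos : ∀ ξ : ℝ, 𝓕 ⇑x ξ ≠ 0 → 0 < (G ξ).re := by
    intro ξ hξ
    have h0 : 0 < RCLike.re (star (𝓕 ⇑x ξ) ⬝ᵥ Q.mulVec (𝓕 ⇑x ξ)) :=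
      hQ.re_dotProduct_pos hξ
    simpa [hGdef, hMdef, Mq_apply] using h0
  have hψnonneg : ∀ ξ : ℝ, 0 ≤ ψ ξ := by
    intro ξ
    by_cases hξ : 𝓕 ⇑x ξ = 0
    · simp [hψdef, hGdef, hξ]
    · exact le_of_lt (mul_pos (hfactor ξ hξ) (hGpos ξ hξ))
  have hψcont : Continuous ψ := by
    apply Continuous.mul
    · fun_prop
    · exact Complex.continuous_re.comp hGcont
  have hψint : Integrable ψ := by
    have h2 := hfreqint.re
    simp only [RCLike.re_to_complex] at h2
    exact h2.congr (Filter.Eventually.of_forall fun ξ => hψmassage ξ)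
  obtain ⟨ξ0, hξ0⟩ : ∃ ξ : ℝ, 𝓕 ⇑x ξ ≠ 0 := by
    by_contra h
    push_neg at h
    have hX0 : fourierTransformCLE ℂ (𝓢(ℝ, Fin n → ℂ)) x = 0 := by
      ext ξ
      have h1 : (fourierTransformCLE ℂ (𝓢(ℝ, Fin n → ℂ)) x) ξ = 𝓕 ⇑x ξ := rfl
      rw [h1, h ξ]
      rfl
    have hx0 : x = 0 := (fourierTransformCLE ℂ (𝓢(ℝ, Fin n → ℂ))).injective (by rw [hX0]; exact (map_zero _).symm)
    obtain ⟨t, ht⟩ := hx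
    rw [hx0] at ht
    simp at ht
  have hψ0pos : 0 < ψ ξ0 := mul_pos (hfactor ξ0 hξ0) (hGpos ξ0 hξ0)
  have e1 : (fun t : ℝ =>
      (ϖl ^ 2 * (star (x t) ⬝ᵥ Q.mulVec (x t)).re
        - (star (deriv (fun s : ℝ => x s) t) ⬝ᵥ
            Q.mulVec (deriv (fun s : ℝ => x s) t)).re))
      = fun t : ℝ => ((((ϖl ^ 2 : ℝ) : ℂ) * M (star (x t)) (x t)
          - M (star (x' t)) (x' t)).re) := by
    funext t
    rw [hx'coe.symm]
    simp only [hMdef, Mq_apply, Complex.sub_re, Complex.re_ofReal_mul]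
  have h2 := integral_re (μ := (volume : Measure ℝ)) hTint
  simp only [RCLike.re_to_complex] at h2
  have h3 := integral_re (μ := (volume : Measure ℝ)) hfreqint
  simp only [RCLike.re_to_complex] at h3
  have hgoal : (∫ t : ℝ,
      (ϖl ^ 2 * (star (x t) ⬝ᵥ Q.mulVec (x t)).re
        - (star (deriv (fun s : ℝ => x s) t) ⬝ᵥ
            Q.mulVec (deriv (fun s : ℝ => x s) t)).re))
      = ∫ ξ : ℝ, ψ ξ := by
    rw [e1, h2, key, ← h3]
    congr 1
    funext ξ
    exact hψmassage ξ
  rw [hgoal]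
  rw [integral_pos_iff_support_of_nonneg hψnonneg hψint]
  exact (hψcont.isOpen_support).measure_pos volume ⟨ξ0, ne_of_gt hψ0pos⟩
end

section
/- Let x : ℝ → ℂⁿ be a Schwartz function that is not identically zero, with Fourier transform 𝒳(ω) := ∫_ℝ x(t) e^{−iωt} dt, let Q be an n×n complex Hermitian positive definite matrix, and let 0 < ϖ_i < ϖ_h be real numbers. If 𝒳(ω) = 0 for every ω with |ω| > ϖ_i, then ∫_ℝ (x'(t)*Qx'(t) − ϖ_h² · x(t)*Qx(t)) dt < 0; equivalently, ∫_ℝ x'(t)*Qx'(t) dt < ϖ_h² ∫_ℝ x(t)*Qx(t) dt. -/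
open MeasureTheory Complex Real FourierTransform Matrix
open scoped ComplexOrder RealInnerProductSpace


lemma sq_norm_integrable (f : SchwartzMap ℝ ℂ) :
    Integrable (fun t : ℝ => ‖f t‖ ^ 2) := by
  have hb : ∀ t : ℝ, ‖‖f t‖‖ ≤ ‖f.toBoundedContinuousFunction‖ := fun t => by
    rw [norm_norm]
    exact (f.toBoundedContinuousFunction.norm_coe_le_norm t)
  have := (f.integrable (μ := volume)).norm.bdd_mul
    (f.continuous.norm.aestronglyMeasurable) (Filter.Eventually.of_forall hb)
  refine this.congr ?_
  filter_upwards with t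
  simp [pow_two]

lemma plancherel_schwartz (f : SchwartzMap ℝ ℂ) :
    ∫ ξ : ℝ, ‖𝓕 (⇑f) ξ‖ ^ 2 = ∫ t : ℝ, ‖f t‖ ^ 2 := by
  set F := SchwartzMap.fourierTransformCLM ℂ f with hF
  have hFc : ⇑F = 𝓕 (⇑f) := rfl
  have hgi : Integrable (fun ξ : ℝ => (starRingEnd ℂ) (F ξ)) := by
    simpa using ((Complex.conjCLE.toContinuousLinearMap).integrable_comp F.integrable)
  -- multiplication formula
  have key := VectorFourier.integral_bilin_fourierIntegral_eq_flip
    (E := ℂ) (F := ℂ) (G := ℂ) (V := ℝ) (W := ℝ)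
    (f := ⇑f) (g := fun ξ : ℝ => (starRingEnd ℂ) (F ξ))
    (μ := volume) (ν := volume) (L := innerₗ ℝ)
    (ContinuousLinearMap.mul ℂ ℂ) Real.continuous_fourierChar
    (by exact continuous_fst.inner continuous_snd)
    f.integrable hgi
  have hflip : (innerₗ ℝ).flip = innerₗ ℝ := by
    apply LinearMap.ext; intro a; apply LinearMap.ext; intro b
    exact real_inner_comm a b
  rw [hflip] at key
  -- identify fourier transforms with Real.fourierIntegral
  change (∫ ξ : ℝ, (𝓕 (⇑f) ξ) * ((starRingEnd ℂ) (F ξ)))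
      = ∫ t : ℝ, (f t) * (𝓕 (fun ξ : ℝ => (starRingEnd ℂ) (F ξ)) t) at key
  -- compute 𝓕 of the conjugate
  have hconj : ∀ t : ℝ, 𝓕 (fun ξ : ℝ => (starRingEnd ℂ) (F ξ)) t
      = (starRingEnd ℂ) (f t) := by
    intro t
    have h1 : 𝓕 (fun ξ : ℝ => (starRingEnd ℂ) (F ξ)) t
        = ∫ ξ : ℝ, (starRingEnd ℂ) ((𝐞 (inner ℝ ξ t : ℝ) : Circle) • F ξ) := by
      rw [Real.fourier_eq]
      congr 1; funext ξ
      rw [Circle.smul_def, Circle.smul_def, smul_eq_mul, smul_eq_mul, _root_.map_mul]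
      congr 1
      rw [Real.fourierChar_apply, Real.fourierChar_apply, ← Complex.exp_conj]
      congr 1
      rw [RingHom.map_mul]
      simp only [Complex.conj_I, Complex.conj_ofReal]
      push_cast
      ring
    rw [h1, integral_conj]
    have h2 : (∫ ξ : ℝ, (𝐞 (inner ℝ ξ t : ℝ) : Circle) • F ξ) = 𝓕⁻ (⇑F) t :=
      (Real.fourierInv_eq _ _).symm
    rw [h2, hFc]
    congr 1
    exact f.integrable.fourierInv_fourier_eq F.integrable f.continuous.continuousAt
  simp only [hconj] at key
  have norm_eq : ∀ z : ℂ, z * (starRingEnd ℂ) z = ((‖z‖ ^ 2 : ℝ) : ℂ) := by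
    intro z
    rw [Complex.mul_conj]
    norm_cast
    simp [Complex.normSq_eq_norm_sq]
  rw [← hFc] at key
  simp only [norm_eq] at key
  have i1 : Integrable (fun ξ : ℝ => ((‖F ξ‖ ^ 2 : ℝ) : ℂ)) := by
    have := sq_norm_integrable F
    exact this.ofReal
  have i2 : Integrable (fun t : ℝ => ((‖f t‖ ^ 2 : ℝ) : ℂ)) := by
    have := sq_norm_integrable f
    exact this.ofReal
  have key2 := congrArg (fun z : ℂ => RCLike.re z) key
  rw [← integral_re i1, ← integral_re i2] at key2
  simpa [hFc, ← Complex.ofReal_pow] using key2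

lemma bernstein_schwartz (f : SchwartzMap ℝ ℂ) (R : ℝ)
    (hs : ∀ ξ : ℝ, R < |2 * π * ξ| → 𝓕 (⇑f) ξ = 0) :
    ∫ t : ℝ, ‖deriv (⇑f) t‖ ^ 2 ≤ R ^ 2 * ∫ t : ℝ, ‖f t‖ ^ 2 := by
  set f' := SchwartzMap.derivCLM ℝ ℂ f with hf'def
  have hf' : ⇑f' = deriv ⇑f := by
    funext t; exact SchwartzMap.derivCLM_apply ℝ f t
  have hder : 𝓕 (deriv ⇑f) = fun ξ : ℝ => ((2 * π * Complex.I * ξ : ℂ)) • 𝓕 (⇑f) ξ :=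
    Real.fourier_deriv f.integrable f.differentiable (by rw [← hf']; exact f'.integrable)
  have e1 : ∫ t : ℝ, ‖deriv (⇑f) t‖ ^ 2 = ∫ ξ : ℝ, ‖𝓕 (deriv ⇑f) ξ‖ ^ 2 := by
    rw [← hf']
    exact (plancherel_schwartz f').symm
  have hnorm : ∀ ξ : ℝ, ‖((2 * π * Complex.I * ξ : ℂ))‖ = |2 * π * ξ| := by
    intro ξ
    rw [show (2 * π * Complex.I * ξ : ℂ) = ((2 * π * ξ : ℝ) : ℂ) * Complex.I by push_cast; ring]
    simp [abs_mul, _root_.abs_of_nonneg Real.pi_nonneg]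
  have ptwise : ∀ ξ : ℝ, ‖𝓕 (deriv ⇑f) ξ‖ ^ 2 ≤ R ^ 2 * ‖𝓕 (⇑f) ξ‖ ^ 2 := by
    intro ξ
    rw [hder]
    by_cases h : R < |2 * π * ξ|
    · simp [hs ξ h]
    · push_neg at h
      rw [norm_smul, hnorm, mul_pow]
      gcongr
  have iFd : Integrable (fun ξ : ℝ => ‖𝓕 (deriv ⇑f) ξ‖ ^ 2) := by
    have hcoe : ⇑(SchwartzMap.fourierTransformCLM ℂ f') = 𝓕 (deriv ⇑f) := by
      rw [SchwartzMap.fourierTransformCLM_apply, SchwartzMap.fourier_coe]; rw [hf']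
    have := sq_norm_integrable (SchwartzMap.fourierTransformCLM ℂ f')
    rwa [hcoe] at this
  have iF : Integrable (fun ξ : ℝ => R ^ 2 * ‖𝓕 (⇑f) ξ‖ ^ 2) := by
    have := (sq_norm_integrable (SchwartzMap.fourierTransformCLM ℂ f)).const_mul (R ^ 2)
    exact this
  calc ∫ t : ℝ, ‖deriv (⇑f) t‖ ^ 2 = ∫ ξ : ℝ, ‖𝓕 (deriv ⇑f) ξ‖ ^ 2 := e1
    _ ≤ ∫ ξ : ℝ, R ^ 2 * ‖𝓕 (⇑f) ξ‖ ^ 2 := integral_mono iFd iF ptwise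
    _ = R ^ 2 * ∫ ξ : ℝ, ‖𝓕 (⇑f) ξ‖ ^ 2 := integral_const_mul _ _
    _ = R ^ 2 * ∫ t : ℝ, ‖f t‖ ^ 2 := by rw [plancherel_schwartz f]

noncomputable def postCLM {E : Type*} [NormedAddCommGroup E] [NormedSpace ℝ E]
    (A : E →L[ℝ] ℂ) : SchwartzMap ℝ E →L[ℝ] SchwartzMap ℝ ℂ :=
  SchwartzMap.bilinLeftCLM ((ContinuousLinearMap.lsmul ℝ ℝ).flip.comp A)
    (Function.HasTemperateGrowth.const (1 : ℝ))

lemma postCLM_apply {E : Type*} [NormedAddCommGroup E] [NormedSpace ℝ E]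
    (A : E →L[ℝ] ℂ) (f : SchwartzMap ℝ E) (t : ℝ) :
    postCLM A f t = A (f t) := by
  show (1 : ℝ) • A (f t) = A (f t)
  exact one_smul ℝ _

/-- Time-domain out-of-band negativity of the FD-EEF with high-frequency weight
`Ψ_h = [[1, 0], [0, −ϖ_h²]]`: for a nonzero Schwartz signal `x` whose Fourier
transform `𝒳(ω) = ∫ x(t) e^{−iωt} dt` vanishes for `|ω| > ϖ_i` with `ϖ_i < ϖ_h`,
one has `∫ (x'*Qx' − ϖ_h² x*Qx) dt < 0`, equivalently
`∫ x'*Qx' dt < ϖ_h² ∫ x*Qx dt`. -/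
theorem fdEEF_time_highFreq_outband_neg {n : ℕ}
    (x : SchwartzMap ℝ (Fin n → ℂ)) (hx : ∃ t : ℝ, x t ≠ 0)
    (Q : Matrix (Fin n) (Fin n) ℂ) (hQ : Q.PosDef)
    (ϖi ϖh : ℝ) (hϖi : 0 < ϖi) (hih : ϖi < ϖh)
    (hsupp : ∀ ω : ℝ, ϖi < |ω| →
      (∫ t : ℝ, Complex.exp (-(Complex.I * ω * t)) • x t) = 0) :
    (∫ t : ℝ,
        ((star (deriv (fun s : ℝ => x s) t) ⬝ᵥ
            Q.mulVec (deriv (fun s : ℝ => x s) t)).re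
          - ϖh ^ 2 * (star (x t) ⬝ᵥ Q.mulVec (x t)).re)) < 0 ∧
    (∫ t : ℝ, (star (deriv (fun s : ℝ => x s) t) ⬝ᵥ
        Q.mulVec (deriv (fun s : ℝ => x s) t)).re)
      < ϖh ^ 2 * ∫ t : ℝ, (star (x t) ⬝ᵥ Q.mulVec (x t)).re := by
  obtain ⟨t0, ht0⟩ := hx
  obtain ⟨S, hSmul, hSH⟩ : ∃ S : Matrix (Fin n) (Fin n) ℂ, S * S = Q ∧ Sᴴ = S :=
    open scoped MatrixOrder in
    ⟨CFC.sqrt Q, CFC.sqrt_mul_sqrt_self Q hQ.posSemidef.nonneg, (CFC.sqrt_nonneg Q).posSemidef.1⟩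
  -- the quadratic form as a sum of squares
  have quad : ∀ v : Fin n → ℂ,
      (star v ⬝ᵥ Q.mulVec v).re = ∑ i, ‖S.mulVec v i‖ ^ 2 := by
    intro v
    have h1 : star v ⬝ᵥ Q.mulVec v = star (S.mulVec v) ⬝ᵥ (S.mulVec v) := by
      rw [Matrix.star_mulVec, hSH, ← hSmul, ← Matrix.mulVec_mulVec,
        dotProduct_mulVec]
    rw [h1, dotProduct, Complex.re_sum]
    congr 1; funext i
    simp only [Pi.star_apply, RCLike.star_def]
    rw [← Complex.normSq_eq_conj_mul_self]
    rw [Complex.ofReal_re, Complex.normSq_eq_norm_sq]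
  -- coordinate functions of S *ᵥ x as Schwartz maps
  have hLi : ∀ i : Fin n, ∃ A : (Fin n → ℂ) →L[ℝ] ℂ,
      (∀ v, A v = S.mulVec v i) ∧ (∀ (c : ℂ) (v), A (c • v) = c • A v) := by
    intro i
    set L : (Fin n → ℂ) →ₗ[ℂ] ℂ := (LinearMap.proj i).comp S.mulVecLin with hLdef
    refine ⟨(LinearMap.toContinuousLinearMap L).restrictScalars ℝ,
      fun v => rfl, fun c v => ?_⟩
    simp only [ContinuousLinearMap.coe_restrictScalars',
      ContinuousLinearMap.coe_coe]
    exact map_smul (LinearMap.toContinuousLinearMap L) c v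
  choose A hA hAsmul using hLi
  set g : Fin n → SchwartzMap ℝ ℂ := fun i => postCLM (A i) x with hgdef
  have hg : ∀ i t, g i t = S.mulVec (x t) i := by
    intro i t; rw [hgdef]; rw [postCLM_apply, hA]
  have hdg : ∀ i t, deriv (⇑(g i)) t = S.mulVec (deriv (⇑x) t) i := by
    intro i t
    have hx' : HasDerivAt (⇑x) (deriv (⇑x) t) t :=
      (x.differentiable t).hasDerivAt
    have : HasDerivAt (fun s => (A i) (x s)) ((A i) (deriv (⇑x) t)) t :=
      ((A i).hasFDerivAt.comp_hasDerivAt t hx')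
    have h2 : (fun s => (A i) (x s)) = ⇑(g i) := by
      funext s; rw [hg i s, hA]
    rw [h2] at this
    rw [this.deriv, hA]
  -- band-limitedness of each coordinate
  have band : ∀ (i : Fin n) (ξ : ℝ), ϖi < |2 * π * ξ| → 𝓕 (⇑(g i)) ξ = 0 := by
    intro i ξ hξ
    have hint : Integrable (fun t : ℝ => (𝐞 (-(t * ξ)) : Circle) • x t) := by
      have := (Real.fourierIntegral_convergent_iff (f := ⇑x) (μ := volume) ξ).2 x.integrable
      simpa [Real.inner_apply, mul_comm] using this
    have hzero : (∫ t : ℝ, (𝐞 (-(t * ξ)) : Circle) • x t) = 0 := by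
      have := hsupp (2 * π * ξ) hξ
      rw [← this]
      congr 1; funext t
      rw [Circle.smul_def, Real.fourierChar_apply]
      congr 1
      push_cast
      ring
    rw [Real.fourier_real_eq]
    have hcongr : (fun t : ℝ => (𝐞 (-(t * ξ)) : Circle) • (g i) t)
        = fun t : ℝ => (A i) ((𝐞 (-(t * ξ)) : Circle) • x t) := by
      funext t
      rw [hg i t, ← hA, Circle.smul_def, Circle.smul_def, hAsmul]
    rw [hcongr, ContinuousLinearMap.integral_comp_comm _ hint, hzero, map_zero]
  -- Bernstein bound for each coordinate
  have key : ∀ i : Fin n, ∫ t : ℝ, ‖deriv (⇑(g i)) t‖ ^ 2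
      ≤ ϖi ^ 2 * ∫ t : ℝ, ‖g i t‖ ^ 2 := fun i =>
    bernstein_schwartz (g i) ϖi (band i)
  -- integrability of the squared coordinates
  have ig : ∀ i : Fin n, Integrable (fun t : ℝ => ‖g i t‖ ^ 2) :=
    fun i => sq_norm_integrable (g i)
  have idg : ∀ i : Fin n, Integrable (fun t : ℝ => ‖deriv (⇑(g i)) t‖ ^ 2) := by
    intro i
    have hco : ⇑(SchwartzMap.derivCLM ℝ ℂ (g i)) = deriv (⇑(g i)) := by
      funext t; exact SchwartzMap.derivCLM_apply ℝ (g i) t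
    have := sq_norm_integrable (SchwartzMap.derivCLM ℝ ℂ (g i))
    rwa [hco] at this
  -- rewrite the two integrands
  have hb : ∀ t : ℝ, (star (x t) ⬝ᵥ Q.mulVec (x t)).re = ∑ i, ‖g i t‖ ^ 2 := by
    intro t; rw [quad]; congr 1; funext i; rw [hg]
  have ha : ∀ t : ℝ, (star (deriv (fun s : ℝ => x s) t) ⬝ᵥ
      Q.mulVec (deriv (fun s : ℝ => x s) t)).re = ∑ i, ‖deriv (⇑(g i)) t‖ ^ 2 := by
    intro t; rw [quad]; congr 1; funext i; rw [hdg]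
  have Ib : Integrable (fun t : ℝ => (star (x t) ⬝ᵥ Q.mulVec (x t)).re) := by
    have : Integrable (fun t : ℝ => ∑ i, ‖g i t‖ ^ 2) :=
      integrable_finset_sum _ (fun i _ => ig i)
    exact this.congr (by filter_upwards with t; rw [hb])
  have Ia : Integrable (fun t : ℝ => (star (deriv (fun s : ℝ => x s) t) ⬝ᵥ
      Q.mulVec (deriv (fun s : ℝ => x s) t)).re) := by
    have : Integrable (fun t : ℝ => ∑ i, ‖deriv (⇑(g i)) t‖ ^ 2) :=
      integrable_finset_sum _ (fun i _ => idg i)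
    exact this.congr (by filter_upwards with t; rw [ha])
  -- integral identities
  have intb : ∫ t : ℝ, (star (x t) ⬝ᵥ Q.mulVec (x t)).re
      = ∑ i, ∫ t : ℝ, ‖g i t‖ ^ 2 := by
    rw [← integral_finset_sum _ (fun i _ => ig i)]
    congr 1; funext t; rw [hb]
  have inta : ∫ t : ℝ, (star (deriv (fun s : ℝ => x s) t) ⬝ᵥ
      Q.mulVec (deriv (fun s : ℝ => x s) t)).re
      = ∑ i, ∫ t : ℝ, ‖deriv (⇑(g i)) t‖ ^ 2 := by
    rw [← integral_finset_sum _ (fun i _ => idg i)]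
    congr 1; funext t; rw [ha]
  -- positivity of ∫ b
  have hbnonneg : ∀ t : ℝ, 0 ≤ (star (x t) ⬝ᵥ Q.mulVec (x t)).re := by
    intro t; rw [hb]; positivity
  have hbt0 : 0 < (star (x t0) ⬝ᵥ Q.mulVec (x t0)).re := by
    have := hQ.dotProduct_mulVec_pos ht0
    rw [Complex.lt_def] at this
    simpa using this.1
  have hbcont : Continuous (fun t : ℝ => (star (x t) ⬝ᵥ Q.mulVec (x t)).re) := by
    have : Continuous (fun t : ℝ => ∑ i, ‖g i t‖ ^ 2) := by
      apply continuous_finset_sum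
      intro i _
      exact ((g i).continuous.norm).pow 2
    convert this using 1
    funext t; rw [hb]
  have hbpos : 0 < ∫ t : ℝ, (star (x t) ⬝ᵥ Q.mulVec (x t)).re := by
    rw [integral_pos_iff_support_of_nonneg hbnonneg Ib]
    have hU : IsOpen ((fun t : ℝ => (star (x t) ⬝ᵥ Q.mulVec (x t)).re) ⁻¹' Set.Ioi 0) :=
      isOpen_Ioi.preimage hbcont
    have hsub : ((fun t : ℝ => (star (x t) ⬝ᵥ Q.mulVec (x t)).re) ⁻¹' Set.Ioi 0)
        ⊆ Function.support (fun t : ℝ => (star (x t) ⬝ᵥ Q.mulVec (x t)).re) :=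
      fun t ht => ne_of_gt ht
    calc (0 : ENNReal)
        < volume ((fun t : ℝ => (star (x t) ⬝ᵥ Q.mulVec (x t)).re) ⁻¹' Set.Ioi 0) :=
          hU.measure_pos volume ⟨t0, hbt0⟩
      _ ≤ _ := measure_mono hsub
  -- final estimates
  have hstep : ∫ t : ℝ, (star (deriv (fun s : ℝ => x s) t) ⬝ᵥ
      Q.mulVec (deriv (fun s : ℝ => x s) t)).re
      ≤ ϖi ^ 2 * ∫ t : ℝ, (star (x t) ⬝ᵥ Q.mulVec (x t)).re := by
    rw [inta, intb, Finset.mul_sum]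
    exact Finset.sum_le_sum (fun i _ => key i)
  have hlt : ϖi ^ 2 * (∫ t : ℝ, (star (x t) ⬝ᵥ Q.mulVec (x t)).re)
      < ϖh ^ 2 * ∫ t : ℝ, (star (x t) ⬝ᵥ Q.mulVec (x t)).re := by
    apply mul_lt_mul_of_pos_right _ hbpos
    exact pow_lt_pow_left₀ hih hϖi.le two_ne_zero
  have second : (∫ t : ℝ, (star (deriv (fun s : ℝ => x s) t) ⬝ᵥ
      Q.mulVec (deriv (fun s : ℝ => x s) t)).re)
      < ϖh ^ 2 * ∫ t : ℝ, (star (x t) ⬝ᵥ Q.mulVec (x t)).re :=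
    lt_of_le_of_lt hstep hlt
  refine ⟨?_, second⟩
  have hsplit : (∫ t : ℝ,
      ((star (deriv (fun s : ℝ => x s) t) ⬝ᵥ
          Q.mulVec (deriv (fun s : ℝ => x s) t)).re
        - ϖh ^ 2 * (star (x t) ⬝ᵥ Q.mulVec (x t)).re))
      = (∫ t : ℝ, (star (deriv (fun s : ℝ => x s) t) ⬝ᵥ
          Q.mulVec (deriv (fun s : ℝ => x s) t)).re)
        - ϖh ^ 2 * ∫ t : ℝ, (star (x t) ⬝ᵥ Q.mulVec (x t)).re := by
    rw [integral_sub Ia (Ib.const_mul (ϖh ^ 2)), integral_const_mul]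
  rw [hsplit]
  linarith [second]
end

section
/- Let A ∈ ℂ^{n×n}, B ∈ ℂ^{n×m}, C ∈ ℂ^{p×n}, D ∈ ℂ^{p×m}, let γ > 0 be real, let Ψ be a 2×2 complex Hermitian matrix, let P be an n×n complex Hermitian matrix, and let Q be an n×n complex Hermitian positive definite matrix. Suppose the Hermitian (n+m)×(n+m) matrix M := [A B; I 0]* (Φ ⊗ P + Ψ ⊗ Q) [A B; I 0] + [C D; 0 I]* [[I_p, 0], [0, −γ²I_m]] [C D; 0 I] is negative definite. Then for every ω ∈ ℝ such that p_Ψ(ω) ≥ 0 and the matrix iωI_n − A is invertible, and for every nonzero u ∈ ℂᵐ, one has ‖(C(iωI_n − A)^{−1}B + D)u‖ < γ‖u‖. -/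
open Matrix Complex MeasureTheory
open scoped ComplexOrder

/-- The scalar frequency form `p_Ψ(ω) = (−iω, 1) Ψ (iω, 1)ᵀ` of a 2×2 complex matrix. -/
noncomputable def pPsi (Ψ : Matrix (Fin 2) (Fin 2) ℂ) (ω : ℝ) : ℂ :=
  Ψ 0 0 * (ω : ℂ) ^ 2 - Complex.I * ω * Ψ 0 1 + Complex.I * ω * Ψ 1 0 + Ψ 1 1

/-- The Kronecker product `Ψ ⊗ Q` of a 2×2 matrix with an n×n matrix, written
as a 2×2 block matrix. -/
noncomputable def kron2 {n : ℕ} (Ψ : Matrix (Fin 2) (Fin 2) ℂ)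
    (Q : Matrix (Fin n) (Fin n) ℂ) : Matrix (Fin n ⊕ Fin n) (Fin n ⊕ Fin n) ℂ :=
  Matrix.fromBlocks (Ψ 0 0 • Q) (Ψ 0 1 • Q) (Ψ 1 0 • Q) (Ψ 1 1 • Q)

/-- `Φ = [[0, 1], [1, 0]]`. -/
noncomputable def PhiMat : Matrix (Fin 2) (Fin 2) ℂ := !![0, 1; 1, 0]

/-- A complex matrix is negative definite if it is Hermitian and `v*Mv < 0` for
all `v ≠ 0`. -/
def NegDefinite {k : Type*} [Fintype k] (M : Matrix k k ℂ) : Prop :=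
  M.IsHermitian ∧ ∀ v : k → ℂ, v ≠ 0 → (star v ⬝ᵥ M.mulVec v).re < 0

private lemma star_sum_elim {α β : Type*} (a : α → ℂ) (b : β → ℂ) :
    star (Sum.elim a b) = Sum.elim (star a) (star b) := by
  funext i; cases i <;> rfl

private lemma quad_conj {k l : Type*} [Fintype k] [Fintype l]
    (M : Matrix k l ℂ) (N : Matrix k k ℂ) (v : l → ℂ) :
    star v ⬝ᵥ (Mᴴ * N * M) *ᵥ v = star (M *ᵥ v) ⬝ᵥ N *ᵥ (M *ᵥ v) := by
  rw [← Matrix.mulVec_mulVec, ← Matrix.mulVec_mulVec, Matrix.dotProduct_mulVec,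
    Matrix.star_mulVec]

private lemma kron_quad {n : ℕ} (Ψ : Matrix (Fin 2) (Fin 2) ℂ)
    (Q : Matrix (Fin n) (Fin n) ℂ) (a b : Fin n → ℂ) :
    star (Sum.elim a b) ⬝ᵥ kron2 Ψ Q *ᵥ Sum.elim a b =
      Ψ 0 0 * (star a ⬝ᵥ Q *ᵥ a) + Ψ 0 1 * (star a ⬝ᵥ Q *ᵥ b) +
      Ψ 1 0 * (star b ⬝ᵥ Q *ᵥ a) + Ψ 1 1 * (star b ⬝ᵥ Q *ᵥ b) := by
  simp only [kron2, Matrix.fromBlocks_mulVec, star_sum_elim,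
    sumElim_dotProduct_sumElim, Sum.elim_comp_inl, Sum.elim_comp_inr,
    Matrix.smul_mulVec, dotProduct_add, dotProduct_smul, smul_eq_mul]
  ring

private lemma dot_star_self {k : Type*} [Fintype k] (v : k → ℂ) :
    star v ⬝ᵥ v = ((∑ i, ‖v i‖ ^ 2 : ℝ) : ℂ) := by
  rw [dotProduct]
  push_cast
  refine Finset.sum_congr rfl fun i _ => ?_
  rw [Pi.star_apply, Complex.star_def, ← Complex.normSq_eq_conj_mul_self,
    ← Complex.sq_norm]
  norm_cast

/-- gKYP lemma, LMI ⇒ finite-frequency gain bound: if the gKYP LMI matrix is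
negative definite, then for every frequency `ω` with `p_Ψ(ω) ≥ 0` at which
`iωI − A` is invertible, the transfer function `G(iω) = C(iωI − A)⁻¹B + D`
satisfies `‖G(iω)u‖ < γ‖u‖` for every nonzero `u`. -/
theorem gKYP_LMI_implies_finiteFrequency_bound {n m p : ℕ}
    (A : Matrix (Fin n) (Fin n) ℂ) (B : Matrix (Fin n) (Fin m) ℂ)
    (C : Matrix (Fin p) (Fin n) ℂ) (D : Matrix (Fin p) (Fin m) ℂ)
    (γ : ℝ) (hγ : 0 < γ)
    (Ψ : Matrix (Fin 2) (Fin 2) ℂ) (hΨ : Ψ.IsHermitian)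
    (P : Matrix (Fin n) (Fin n) ℂ) (hP : P.IsHermitian)
    (Q : Matrix (Fin n) (Fin n) ℂ) (hQ : Q.PosDef)
    (hM : NegDefinite
      ((Matrix.fromBlocks A B (1 : Matrix (Fin n) (Fin n) ℂ) (0 : Matrix (Fin n) (Fin m) ℂ))ᴴ
          * (kron2 PhiMat P + kron2 Ψ Q)
          * Matrix.fromBlocks A B (1 : Matrix (Fin n) (Fin n) ℂ) (0 : Matrix (Fin n) (Fin m) ℂ)
        + (Matrix.fromBlocks C D (0 : Matrix (Fin m) (Fin n) ℂ) (1 : Matrix (Fin m) (Fin m) ℂ))ᴴ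
            * Matrix.fromBlocks (1 : Matrix (Fin p) (Fin p) ℂ) (0 : Matrix (Fin p) (Fin m) ℂ)
                (0 : Matrix (Fin m) (Fin p) ℂ) (-((γ : ℂ) ^ 2) • (1 : Matrix (Fin m) (Fin m) ℂ))
            * Matrix.fromBlocks C D (0 : Matrix (Fin m) (Fin n) ℂ) (1 : Matrix (Fin m) (Fin m) ℂ)))
    (ω : ℝ) (hfreq : 0 ≤ (pPsi Ψ ω).re)
    (hinv : IsUnit ((Complex.I * ω) • (1 : Matrix (Fin n) (Fin n) ℂ) - A))
    (u : EuclideanSpace ℂ (Fin m)) (hu : u ≠ 0) :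
    ‖Matrix.toEuclideanLin
        (C * ((Complex.I * ω) • (1 : Matrix (Fin n) (Fin n) ℂ) - A)⁻¹ * B + D) u‖
      < γ * ‖u‖ := by
  obtain ⟨_, hneg⟩ := hM
  set c : ℂ := Complex.I * ω with hc
  set S : Matrix (Fin n) (Fin n) ℂ := c • 1 - A with hS
  have hdet : IsUnit S.det := (Matrix.isUnit_iff_isUnit_det S).mp hinv
  set u' : Fin m → ℂ := WithLp.equiv 2 (Fin m → ℂ) u with hu'
  set x : Fin n → ℂ := S⁻¹ *ᵥ (B *ᵥ u') with hx
  have hSx : S *ᵥ x = B *ᵥ u' := by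
    rw [hx, Matrix.mulVec_mulVec, Matrix.mul_nonsing_inv _ hdet, Matrix.one_mulVec]
  have hAx : A *ᵥ x + B *ᵥ u' = c • x := by
    rw [← hSx, hS, Matrix.sub_mulVec, Matrix.smul_mulVec, Matrix.one_mulVec]
    abel
  set z : Fin n ⊕ Fin m → ℂ := Sum.elim x u' with hz
  have hu'0 : u' ≠ 0 := by
    intro h
    apply hu
    ext j
    exact congrFun h j
  have hz0 : z ≠ 0 := by
    intro h
    exact hu'0 (funext fun j => congrFun h (Sum.inr j))
  have hzneg := hneg z hz0
  -- first block image
  have hRA : Matrix.fromBlocks A B (1 : Matrix (Fin n) (Fin n) ℂ)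
      (0 : Matrix (Fin n) (Fin m) ℂ) *ᵥ z = Sum.elim (c • x) x := by
    rw [hz, Matrix.fromBlocks_mulVec]
    simp only [Sum.elim_comp_inl, Sum.elim_comp_inr, Matrix.one_mulVec, Matrix.zero_mulVec,
      add_zero, hAx]
  have hRC : Matrix.fromBlocks C D (0 : Matrix (Fin m) (Fin n) ℂ)
      (1 : Matrix (Fin m) (Fin m) ℂ) *ᵥ z
      = Sum.elim (C *ᵥ x + D *ᵥ u') u' := by
    rw [hz, Matrix.fromBlocks_mulVec]
    simp only [Sum.elim_comp_inl, Sum.elim_comp_inr, Matrix.one_mulVec, Matrix.zero_mulVec,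
      zero_add]
  set g : Fin p → ℂ := C *ᵥ x + D *ᵥ u' with hg
  set qP : ℂ := star x ⬝ᵥ P *ᵥ x with hqP
  set qQ : ℂ := star x ⬝ᵥ Q *ᵥ x with hqQ
  set a : ℝ := ∑ i, ‖g i‖ ^ 2 with ha
  set b : ℝ := ∑ i, ‖u' i‖ ^ 2 with hb
  -- evaluate the quadratic form
  have hsplit : star z ⬝ᵥ
      ((Matrix.fromBlocks A B (1 : Matrix (Fin n) (Fin n) ℂ) (0 : Matrix (Fin n) (Fin m) ℂ))ᴴ
          * (kron2 PhiMat P + kron2 Ψ Q)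
          * Matrix.fromBlocks A B (1 : Matrix (Fin n) (Fin n) ℂ) (0 : Matrix (Fin n) (Fin m) ℂ)
        + (Matrix.fromBlocks C D (0 : Matrix (Fin m) (Fin n) ℂ) (1 : Matrix (Fin m) (Fin m) ℂ))ᴴ
            * Matrix.fromBlocks (1 : Matrix (Fin p) (Fin p) ℂ) (0 : Matrix (Fin p) (Fin m) ℂ)
                (0 : Matrix (Fin m) (Fin p) ℂ) (-((γ : ℂ) ^ 2) • (1 : Matrix (Fin m) (Fin m) ℂ))
            * Matrix.fromBlocks C D (0 : Matrix (Fin m) (Fin n) ℂ)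
                (1 : Matrix (Fin m) (Fin m) ℂ)) *ᵥ z
      = pPsi Ψ ω * qQ + ((a : ℂ) - (γ : ℂ) ^ 2 * (b : ℂ)) := by
    rw [Matrix.add_mulVec, dotProduct_add, quad_conj, quad_conj, hRA, hRC]
    have h1 : star (Sum.elim (c • x) x) ⬝ᵥ (kron2 PhiMat P + kron2 Ψ Q) *ᵥ
        Sum.elim (c • x) x = pPsi Ψ ω * qQ := by
      rw [Matrix.add_mulVec, dotProduct_add, kron_quad, kron_quad]
      have e1 : ∀ (R : Matrix (Fin n) (Fin n) ℂ),
          star (c • x) ⬝ᵥ R *ᵥ (c • x) = star c * c * (star x ⬝ᵥ R *ᵥ x) := fun R => by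
        rw [star_smul, Matrix.mulVec_smul, smul_dotProduct, dotProduct_smul,
          smul_eq_mul, smul_eq_mul]; ring
      have e2 : ∀ (R : Matrix (Fin n) (Fin n) ℂ),
          star (c • x) ⬝ᵥ R *ᵥ x = star c * (star x ⬝ᵥ R *ᵥ x) := fun R => by
        rw [star_smul, smul_dotProduct, smul_eq_mul]
      have e3 : ∀ (R : Matrix (Fin n) (Fin n) ℂ),
          star x ⬝ᵥ R *ᵥ (c • x) = c * (star x ⬝ᵥ R *ᵥ x) := fun R => by
        rw [Matrix.mulVec_smul, dotProduct_smul, smul_eq_mul]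
      rw [e1, e1, e2, e2, e3, e3]
      have hcs : star c = -(Complex.I * ω) := by
        rw [hc, star_mul', Complex.star_def, Complex.conj_I, Complex.conj_ofReal]
        ring
      rw [hcs, hc]
      have p00 : PhiMat 0 0 = 0 := rfl
      have p01 : PhiMat 0 1 = 1 := rfl
      have p10 : PhiMat 1 0 = 1 := rfl
      have p11 : PhiMat 1 1 = 0 := rfl
      rw [p00, p01, p10, p11, pPsi]
      linear_combination (-(Ψ 0 0) * qQ * (ω : ℂ) ^ 2) * Complex.I_sq
    have h2 : star (Sum.elim g u') ⬝ᵥ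
        (Matrix.fromBlocks (1 : Matrix (Fin p) (Fin p) ℂ) (0 : Matrix (Fin p) (Fin m) ℂ)
          (0 : Matrix (Fin m) (Fin p) ℂ)
          (-((γ : ℂ) ^ 2) • (1 : Matrix (Fin m) (Fin m) ℂ))) *ᵥ Sum.elim g u'
        = (a : ℂ) - (γ : ℂ) ^ 2 * (b : ℂ) := by
      rw [Matrix.fromBlocks_mulVec, star_sum_elim, sumElim_dotProduct_sumElim]
      simp only [Sum.elim_comp_inl, Sum.elim_comp_inr, Matrix.one_mulVec, Matrix.zero_mulVec,
        add_zero, zero_add, Matrix.smul_mulVec, dotProduct_smul, smul_eq_mul]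
      rw [dot_star_self, dot_star_self, ← ha, ← hb]
      ring
    rw [h1, h2]
  rw [hsplit] at hzneg
  -- nonnegativity of the frequency term
  have hqQ0 : (0 : ℂ) ≤ qQ := hQ.posSemidef.dotProduct_mulVec_nonneg x
  have hqQre : 0 ≤ qQ.re := (Complex.le_def.mp hqQ0).1
  have hqQim : qQ.im = 0 := ((Complex.le_def.mp hqQ0).2).symm
  have hterm : 0 ≤ (pPsi Ψ ω * qQ).re := by
    rw [Complex.mul_re, hqQim]
    simpa using mul_nonneg hfreq hqQre
  have hkey : a < γ ^ 2 * b := by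
    have : (pPsi Ψ ω * qQ).re + (a - γ ^ 2 * b) < 0 := by
      simpa [Complex.add_re, Complex.sub_re, Complex.mul_re, ← Complex.ofReal_pow] using hzneg
    nlinarith
  -- identify the transfer function output with g
  have hgG : (C * S⁻¹ * B + D) *ᵥ u' = g := by
    rw [Matrix.add_mulVec, hg, hx, Matrix.mulVec_mulVec, Matrix.mulVec_mulVec]
  have hGu : Matrix.toEuclideanLin (C * S⁻¹ * B + D) u
      = (WithLp.equiv 2 (Fin p → ℂ)).symm g := by
    have : u = (WithLp.equiv 2 (Fin m → ℂ)).symm u' := rfl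
    rw [this, ← hgG]; rfl
  have hnormg : ‖Matrix.toEuclideanLin (C * S⁻¹ * B + D) u‖ = Real.sqrt a := by
    rw [hGu, EuclideanSpace.norm_eq]
    rfl
  have hnormu : ‖u‖ = Real.sqrt b := by
    rw [EuclideanSpace.norm_eq]
    rfl
  rw [hS] at hnormg
  rw [hnormg, hnormu]
  have hb0 : 0 ≤ b := Finset.sum_nonneg fun i _ => sq_nonneg _
  have ha0 : 0 ≤ a := Finset.sum_nonneg fun i _ => sq_nonneg _
  have : Real.sqrt a < Real.sqrt (γ ^ 2 * b) := by
    exact Real.sqrt_lt_sqrt ha0 hkey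
  calc Real.sqrt a < Real.sqrt (γ ^ 2 * b) := this
    _ = γ * Real.sqrt b := by
        rw [Real.sqrt_mul (sq_nonneg γ), Real.sqrt_sq hγ.le]
end
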